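/- arXiv:2405.01519 — 3 statements merged into one kernel-verified Lean document; each statement's English description precedes it below -/
import Mathlib

section
/- Let φ: ℝ → ℝ be a nonnegative integrable function supported in [-1,1] that is symmetric (φ(-s) = φ(s)). Then ∫₀¹∫₀¹ φ(s-u) ds du + 2·∫₀¹∫₀¹ φ(s+u) ds du = ∫_{-1}^{1} φ(s) ds = ‖φ‖₁. -/
/-! With `F x = ∫ t in 0..x, φ t`, the inner integrals are `F s - F (s - 1)` and
`F (s + 1) - F s`. Symmetry makes `F` odd and the support condition makes `F` constant on
`[1, ∞)`, so for `s ∈ [0, 1]` the integrand of the sum is `2 F 1 + F (1 - s) - F s`, whose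
last two terms cancel after integrating over `[0, 1]`; and `∫ s in -1..1, φ s = 2 F 1`. -/

open MeasureTheory Set intervalIntegral

section
variable {f : ℝ → ℝ}

theorem integral_zero_neg_of_even (hf : ∀ x, f (-x) = f x) (x : ℝ) :
    ∫ t in 0..-x, f t = -∫ t in 0..x, f t := by
  rw [integral_symm, ← neg_zero, ← integral_comp_neg, neg_zero]
  simp only [hf]

theorem integral_eq_of_eqOn_zero {a b c : ℝ} (hab : IntervalIntegrable f volume a b)
    (hbc : IntervalIntegrable f volume b c) (hf : EqOn f 0 (uIcc b c)) :
    ∫ t in a..c, f t = ∫ t in a..b, f t := by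
  rw [← integral_add_adjacent_intervals hab hbc, integral_congr (g := fun _ => 0) hf,
    intervalIntegral.integral_zero, add_zero]

end

theorem stmt0_general (φ : ℝ → ℝ) (hint : Integrable φ)
    (hsupp : ∀ x : ℝ, 1 ≤ |x| → φ x = 0) (hsymm : ∀ x, φ (-x) = φ x) :
    ((∫ s in (0:ℝ)..1, ∫ u in (0:ℝ)..1, φ (s - u)) +
      2 * ∫ s in (0:ℝ)..1, ∫ u in (0:ℝ)..1, φ (s + u)) = (∫ s in (-1:ℝ)..1, φ s) ∧
    (∫ s in (-1:ℝ)..1, φ s) = ∫ s, φ s := by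
  set F : ℝ → ℝ := fun x => ∫ t in (0:ℝ)..x, φ t
  have hφ : ∀ a b : ℝ, IntervalIntegrable φ volume a b := fun _ _ => hint.intervalIntegrable
  have hF : Continuous F := hint.continuous_primitive 0
  have hdiag : ∀ s, ∫ u in (0:ℝ)..1, φ (s - u) = F s + F (1 - s) := fun s => by
    rw [integral_comp_sub_left, sub_zero, ← integral_interval_sub_left (hφ 0 s) (hφ 0 (s - 1)),
      show s - 1 = -(1 - s) by ring, integral_zero_neg_of_even hsymm, sub_neg_eq_add]
  have hoff : ∀ s ∈ uIcc (0:ℝ) 1, ∫ u in (0:ℝ)..1, φ (s + u) = F 1 - F s := fun s hs => by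
    rw [uIcc_of_le zero_le_one] at hs
    rw [integral_comp_add_left, add_zero, ← integral_interval_sub_left (hφ 0 _) (hφ 0 s)]
    congr 1
    refine integral_eq_of_eqOn_zero (hφ 0 1) (hφ 1 _) fun x hx => hsupp x ?_
    rw [uIcc_of_le (by linarith [hs.1])] at hx
    exact le_abs.2 (Or.inl hx.1)
  have hreflect : ∫ s in (0:ℝ)..1, F (1 - s) = ∫ s in (0:ℝ)..1, F s := by
    simp [integral_comp_sub_left]
  have hsym_interval : ∫ s in (-1:ℝ)..1, φ s = 2 * F 1 := by
    rw [← integral_interval_sub_left (hφ 0 1) (hφ 0 (-1)), integral_zero_neg_of_even hsymm]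
    ring
  refine ⟨?_, ?_⟩
  · rw [integral_congr hoff, funext hdiag, integral_add (hF.intervalIntegrable 0 1)
      ((by fun_prop : Continuous fun s => F (1 - s)).intervalIntegrable 0 1), integral_sub
      intervalIntegrable_const (hF.intervalIntegrable 0 1), hreflect, hsym_interval]
    simp only [intervalIntegral.integral_const, sub_zero, smul_eq_mul, one_mul]
    ring
  · refine integral_eq_integral_of_support_subset fun x hx => ?_
    obtain ⟨hlo, hhi⟩ := abs_lt.1 (not_le.1 (mt (hsupp x) hx))
    exact ⟨hlo, hhi.le⟩

/-- For a nonnegative integrable `φ : ℝ → ℝ` supported in `[-1,1]` and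
symmetric about `0`, the diagonal block plus twice the off-diagonal block of double
integrals over the unit square equals `∫_{-1}^1 φ`, which equals `‖φ‖₁ = ∫ φ`. -/
theorem stmt0 (φ : ℝ → ℝ) (hnn : ∀ x, 0 ≤ φ x) (hint : Integrable φ)
    (hsupp : ∀ x : ℝ, 1 ≤ |x| → φ x = 0) (hsymm : ∀ x, φ (-x) = φ x) :
    ((∫ s in (0:ℝ)..1, ∫ u in (0:ℝ)..1, φ (s - u)) +
      2 * ∫ s in (0:ℝ)..1, ∫ u in (0:ℝ)..1, φ (s + u)) = (∫ s in (-1:ℝ)..1, φ s) ∧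
    (∫ s in (-1:ℝ)..1, φ s) = ∫ s, φ s :=
  stmt0_general φ hint hsupp hsymm
end

section
/- Let μ be a probability kernel π(x, dy) on a measurable space S and suppose there exist constants A, B > 0 such that A·ν(E) ≤ π(x, E) ≤ B·ν(E) for all x ∈ S and all measurable E, where ν is a fixed probability measure. Let (X₀, X₁, ..., X_p) be a Markov chain with X₀ ∼ ν and transitions π. Then for any nonnegative measurable F on S^{p+1} and any 1 ≤ k ≤ p: A·E[F(X₀,...,X̃ₖ,...,X_p)] ≤ E[F(X₀,...,X_p)] ≤ B·E[F(X₀,...,X̃ₖ,...,X_p)], where on the left and right the chain is generated the same way except that at step k one samples X̃ₖ ∼ ν independently of the previous steps (and subsequent steps use π from X̃ₖ). -/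
open MeasureTheory ProbabilityTheory
open scoped ENNReal

/-! The two chains have the same law up to time `k - 1` and the same transitions after time `k`;
they differ only in the law of the step to `X_k`, which is `π(x, ·)` for one and `ν` for the
other. Binding the common law of `(X₀, …, X_{k-1})` against the sandwich
`A·ν ≤ π(x, ·) ≤ B·ν` gives the scaled inequality between the laws of `(X₀, …, X_k)`,
binding against the common later transitions preserves it, and a scaled inequality of
measures integrates to the same inequality for the integrals of any `F ≥ 0`. -/

/-- The law of a Markov chain `(X₀, X₁, ..., X_p)` on `S` with initial law `ν` and
(time-inhomogeneous) transition kernels `κ n` (governing the step from `X_n` to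
`X_{n+1}`), as a measure on `Fin (p+1) → S`. -/
noncomputable def chainLaw {S : Type*} [MeasurableSpace S] (ν : Measure S)
    (κ : ℕ → ProbabilityTheory.Kernel S S) : (p : ℕ) → Measure (Fin (p + 1) → S)
  | 0 => ν.map (fun x => fun _ => x)
  | (p + 1) =>
      (chainLaw ν κ p).bind
        (fun xs => ((κ p) (xs (Fin.last p))).map (fun y => Fin.snoc xs y))

namespace MeasureTheory

variable {α β : Type*} [MeasurableSpace α] [MeasurableSpace β]

lemma mul_lintegral_le_mul_lintegral_of_smul_le {μ μ' : Measure α} {c d : ℝ≥0∞}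
    (h : c • μ ≤ d • μ') (f : α → ℝ≥0∞) :
    c * ∫⁻ x, f x ∂μ ≤ d * ∫⁻ x, f x ∂μ' := by
  simpa only [lintegral_smul_measure, smul_eq_mul] using lintegral_mono' h le_rfl

namespace Measure

lemma smul_bind_le_smul_bind_of_le {μ μ' : Measure α} {g : α → Measure β} {c d : ℝ≥0∞}
    (h : c • μ ≤ d • μ') (hg : Measurable g) : c • μ.bind g ≤ d • μ'.bind g := by
  rw [← bind_smul, ← bind_smul]
  refine le_iff.mpr fun s hs => ?_
  rw [bind_apply hs hg.aemeasurable, bind_apply hs hg.aemeasurable]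
  exact lintegral_mono' h le_rfl

lemma smul_bind_le_smul_bind_of_forall_le {μ : Measure α} {f g : α → Measure β}
    {c d : ℝ≥0∞} (h : ∀ a, c • f a ≤ d • g a) (hf : Measurable f)
    (hg : Measurable g) : c • μ.bind f ≤ d • μ.bind g := by
  refine le_iff.mpr fun s hs => ?_
  simp only [smul_apply, smul_eq_mul, bind_apply hs hf.aemeasurable,
    bind_apply hs hg.aemeasurable]
  have hfs : Measurable fun a => f a s := (measurable_coe hs).comp hf
  have hgs : Measurable fun a => g a s := (measurable_coe hs).comp hg
  rw [← lintegral_const_mul _ hfs, ← lintegral_const_mul _ hgs]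
  exact lintegral_mono fun a => le_iff'.mp (h a) s

end Measure

end MeasureTheory

namespace ProbabilityTheory.Kernel

variable {α β : Type*} [MeasurableSpace α] [MeasurableSpace β]

lemma measurable_map_of_measurable_uncurry {γ : Type*} [MeasurableSpace γ] (η : Kernel α β)
    [IsSFiniteKernel η] {f : α → β → γ} (hf : Measurable (Function.uncurry f)) :
    Measurable fun a => (η a).map (f a) := by
  refine Measure.measurable_of_measurable_coe _ fun s hs => ?_
  have hfa (a : α) : Measurable (f a) := hf.comp measurable_prodMk_left
  simp_rw [Measure.map_apply (hfa _) hs]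
  exact measurable_kernel_prodMk_left (hf hs)

end ProbabilityTheory.Kernel

lemma measurable_snoc {S : Type*} [MeasurableSpace S] {n : ℕ} :
    Measurable fun z : (Fin n → S) × S => (Fin.snoc z.1 z.2 : Fin (n + 1) → S) := by
  refine measurable_pi_lambda _ fun i => ?_
  induction i using Fin.lastCases with
  | last => simpa using measurable_snd
  | cast j => simpa using measurable_fst.eval

section ChainLaw

variable {S : Type*} [MeasurableSpace S]

lemma measurable_chainLaw_step (κ : Kernel S S) [IsSFiniteKernel κ] (q : ℕ) :
    Measurable fun xs : Fin (q + 1) → S =>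
      (κ (xs (Fin.last q))).map fun y => (Fin.snoc xs y : Fin (q + 2) → S) :=
  (κ.comap (fun xs : Fin (q + 1) → S => xs (Fin.last q)) (measurable_pi_apply _))
    |>.measurable_map_of_measurable_uncurry measurable_snoc

lemma chainLaw_congr (ν : Measure S) {κ κ' : ℕ → Kernel S S} {q : ℕ}
    (h : ∀ n < q, κ n = κ' n) : chainLaw ν κ q = chainLaw ν κ' q := by
  induction q with
  | zero => rfl
  | succ q ih =>
    simp only [chainLaw, ih fun n hn => h n (hn.trans q.lt_succ_self), h q q.lt_succ_self]

theorem smul_chainLaw_le_smul_chainLaw (ν : Measure S) {κ κ' : ℕ → Kernel S S}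
    [∀ n, IsSFiniteKernel (κ n)] [∀ n, IsSFiniteKernel (κ' n)] {c d : ℝ≥0∞} {m q : ℕ}
    (hmq : m < q) (hκ : ∀ n ≠ m, κ n = κ' n) (hm : ∀ x, c • κ m x ≤ d • κ' m x) :
    c • chainLaw ν κ q ≤ d • chainLaw ν κ' q := by
  induction q, hmq using Nat.le_induction with
  | base =>
    rw [chainLaw, chainLaw, chainLaw_congr ν fun n hn => hκ n hn.ne]
    refine Measure.smul_bind_le_smul_bind_of_forall_le (fun xs => ?_)
      (measurable_chainLaw_step _ m) (measurable_chainLaw_step _ m)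
    rw [← Measure.map_smul, ← Measure.map_smul]
    exact Measure.map_mono (hm _) (measurable_snoc.comp measurable_prodMk_left)
  | succ q hmq ih =>
    rw [chainLaw, chainLaw, hκ q (by omega)]
    exact Measure.smul_bind_le_smul_bind_of_le ih (measurable_chainLaw_step _ q)

end ChainLaw

theorem stmt4_general {S : Type*} [MeasurableSpace S] (ν : Measure S) [IsProbabilityMeasure ν]
    (π : ProbabilityTheory.Kernel S S) [ProbabilityTheory.IsMarkovKernel π]
    (A B : ℝ≥0∞)
    (hbound : ∀ x : S, ∀ E : Set S, MeasurableSet E →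
      A * ν E ≤ π x E ∧ π x E ≤ B * ν E)
    (p k : ℕ) (hk1 : 1 ≤ k) (hkp : k ≤ p)
    (F : (Fin (p + 1) → S) → ℝ≥0∞) :
    A * (∫⁻ xs, F xs
          ∂(chainLaw ν (fun n => if n = k - 1 then ProbabilityTheory.Kernel.const S ν else π) p))
        ≤ ∫⁻ xs, F xs ∂(chainLaw ν (fun _ => π) p) ∧
    (∫⁻ xs, F xs ∂(chainLaw ν (fun _ => π) p))
        ≤ B * ∫⁻ xs, F xs
          ∂(chainLaw ν (fun n => if n = k - 1 then ProbabilityTheory.Kernel.const S ν else π) p) := by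
  set κ : ℕ → Kernel S S := fun n => if n = k - 1 then Kernel.const S ν else π
  have : ∀ n, IsSFiniteKernel (κ n) := fun n => by unfold κ; split_ifs <;> infer_instance
  have hk_lt : k - 1 < p := by omega
  have hκ : ∀ n ≠ k - 1, κ n = π := fun n hn => if_neg hn
  have hκk : κ (k - 1) = Kernel.const S ν := if_pos rfl
  have hlower : A • chainLaw ν κ p ≤ (1 : ℝ≥0∞) • chainLaw ν (fun _ => π) p :=
    smul_chainLaw_le_smul_chainLaw ν hk_lt hκ fun x => by
      rw [hκk, one_smul]
      exact Measure.le_iff.mpr fun E hE => (hbound x E hE).1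
  have hupper : (1 : ℝ≥0∞) • chainLaw ν (fun _ => π) p ≤ B • chainLaw ν κ p :=
    smul_chainLaw_le_smul_chainLaw ν hk_lt (fun n hn => (hκ n hn).symm) fun x => by
      rw [hκk, one_smul]
      exact Measure.le_iff.mpr fun E hE => (hbound x E hE).2
  have hlower' := mul_lintegral_le_mul_lintegral_of_smul_le hlower F
  have hupper' := mul_lintegral_le_mul_lintegral_of_smul_le hupper F
  rw [one_mul] at hlower' hupper'
  exact ⟨hlower', hupper'⟩

/-- the two-sided Doeblin sandwich `A·ν ≤ π(x,·) ≤ B·ν` transfers to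
expectations of nonnegative functionals of the Markov chain, when step `k`
(for `1 ≤ k ≤ p`) is resampled independently from `ν`. -/
theorem stmt4 {S : Type*} [MeasurableSpace S] (ν : Measure S) [IsProbabilityMeasure ν]
    (π : ProbabilityTheory.Kernel S S) [ProbabilityTheory.IsMarkovKernel π]
    (A B : ℝ≥0∞) (hA : 0 < A) (hB : 0 < B)
    (hbound : ∀ x : S, ∀ E : Set S, MeasurableSet E →
      A * ν E ≤ π x E ∧ π x E ≤ B * ν E)
    (p k : ℕ) (hk1 : 1 ≤ k) (hkp : k ≤ p)
    (F : (Fin (p + 1) → S) → ℝ≥0∞) (hF : Measurable F) :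
    A * (∫⁻ xs, F xs
          ∂(chainLaw ν (fun n => if n = k - 1 then ProbabilityTheory.Kernel.const S ν else π) p))
        ≤ ∫⁻ xs, F xs ∂(chainLaw ν (fun _ => π) p) ∧
    (∫⁻ xs, F xs ∂(chainLaw ν (fun _ => π) p))
        ≤ B * ∫⁻ xs, F xs
          ∂(chainLaw ν (fun n => if n = k - 1 then ProbabilityTheory.Kernel.const S ν else π) p) :=
  stmt4_general ν π A B hbound p k hk1 hkp F
end

section
/- (Khas'minskii-type lemma for sums with 2-dependence.) Let (Dₖ)_{k=1}^{n} be nonnegative random variables adapted to a filtration (𝓕ₖ), with Dₖ ≤ δ almost surely for all k, and suppose η := sup over k₀ and conditioning of E[Σ_{k=k₀+3}^{n} Dₖ | 𝓕_{k₀}] ≤ η < 1 with η + 2δ < 1. Then E[∏_{k=1}^{n}(1 + Dₖ)] ≤ 1/(1 − η − 2δ). -/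
/-!
Expanding the product writes `E[∏ (1 + Dₖ)]` as the sum over `p` of the sums of `E[∏_{k ∈ t} Dₖ]`
over the `p`-subsets `t` of `{1, …, n}`. Splitting off the largest index `m` of a `(p+1)`-subset
`insert m t`, the indices `m ≥ max t + 3` contribute at most `η · E[∏_{k ∈ t} Dₖ]` by pulling the
`𝓕_{max t}`-measurable product out of the conditional expectation, and the two indices
`max t + 1, max t + 2` at most `2δ · E[∏_{k ∈ t} Dₖ]`. Hence the `p`-th term is at most
`(η + 2δ)^p`, and the geometric series gives the bound.
-/

open MeasureTheory Finset

namespace Finset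

theorem sup_id_insert_of_sup_id_lt {t : Finset ℕ} {m : ℕ} (h : t.sup id < m) :
    (insert m t).sup id = m := by
  rw [sup_insert, id, sup_eq_left.2 h.le]

theorem notMem_of_sup_id_lt {t : Finset ℕ} {m : ℕ} (h : t.sup id < m) : m ∉ t :=
  fun hm => (le_sup (f := id) hm).not_gt h

theorem sup_id_erase_lt {t : Finset ℕ} (ht : 0 < t.sup id) :
    (t.erase (t.sup id)).sup id < t.sup id :=
  (Finset.sup_lt_iff ht).2 fun _ hk =>
    (le_sup (f := id) (mem_of_mem_erase hk)).lt_of_ne (ne_of_mem_erase hk)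

theorem sup_id_mem {t : Finset ℕ} (ht : t.Nonempty) : t.sup id ∈ t := by
  obtain ⟨k, hk, h⟩ := exists_mem_eq_sup t ht id
  exact h ▸ hk

/- Indexing from `1` matters: `(∅ : Finset ℕ).sup id = 0`, so for `p = 0` the inner sum runs over
all of `{1, …, n}`. -/
theorem sum_powersetCard_succ_Icc_one {M : Type*} [AddCommMonoid M] (n p : ℕ)
    (g : Finset ℕ → M) :
    ∑ t ∈ powersetCard (p + 1) (Icc 1 n), g t =
      ∑ t ∈ powersetCard p (Icc 1 n), ∑ m ∈ Ioc (t.sup id) n, g (insert m t) := by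
  rw [sum_sigma']
  refine (sum_nbij' (fun x => insert x.2 x.1) (fun t => ⟨t.erase (t.sup id), t.sup id⟩)
    ?_ ?_ ?_ ?_ ?_).symm
  · simp only [mem_sigma, mem_powersetCard, mem_Ioc, and_imp, Sigma.forall]
    intro t m hts htp hm hmn
    refine ⟨insert_subset (mem_Icc.2 ⟨by omega, hmn⟩) hts, ?_⟩
    rw [card_insert_of_notMem (notMem_of_sup_id_lt hm), htp]
  · intro t ht
    simp only [mem_sigma, mem_powersetCard, mem_Ioc] at ht ⊢
    have hne : t.Nonempty := card_pos.1 (by omega)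
    have hmem := sup_id_mem hne
    refine ⟨⟨(erase_subset _ _).trans ht.1, by rw [card_erase_of_mem hmem, ht.2]; rfl⟩,
      sup_id_erase_lt (mem_Icc.1 (ht.1 hmem)).1, (mem_Icc.1 (ht.1 hmem)).2⟩
  · simp only [mem_sigma, mem_Ioc, and_imp, Sigma.forall]
    intro t m _ hm _
    rw [sup_id_insert_of_sup_id_lt hm, erase_insert (notMem_of_sup_id_lt hm)]
  · intro t ht
    simp only [mem_powersetCard] at ht
    exact insert_erase (sup_id_mem (card_pos.1 (by omega)))
  · intro x _
    rfl

end Finset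

section

variable {Ω : Type*} {m0 : MeasurableSpace Ω} {μ : Measure Ω}

theorem ae_norm_le_of_ae_nonneg_le {f : Ω → ℝ} {C : ℝ} (h : ∀ᵐ ω ∂μ, 0 ≤ f ω ∧ f ω ≤ C) :
    ∀ᵐ ω ∂μ, ‖f ω‖ ≤ C :=
  h.mono fun _ hω => (Real.norm_of_nonneg hω.1).trans_le hω.2

theorem integral_mul_le_of_ae_le {f h : Ω → ℝ} {δ : ℝ}
    (hhf : Integrable (fun ω => h ω * f ω) μ) (hf : Integrable f μ) (hh : ∀ᵐ ω ∂μ, h ω ≤ δ)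
    (hf0 : ∀ᵐ ω ∂μ, 0 ≤ f ω) :
    ∫ ω, h ω * f ω ∂μ ≤ δ * ∫ ω, f ω ∂μ := by
  rw [← integral_const_mul]
  refine integral_mono_ae hhf (hf.const_mul δ) ?_
  filter_upwards [hh, hf0] with ω hhω hfω
  exact mul_le_mul_of_nonneg_right hhω hfω

theorem integral_mul_le_of_condExp_le [IsFiniteMeasure μ] {m : MeasurableSpace Ω}
    (hm : m ≤ m0) {f g : Ω → ℝ} {C η : ℝ} (hf : StronglyMeasurable[m] f) (hf0 : ∀ᵐ ω ∂μ, 0 ≤ f ω)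
    (hfC : ∀ᵐ ω ∂μ, ‖f ω‖ ≤ C) (hg : Integrable g μ) (hgη : ∀ᵐ ω ∂μ, μ[g | m] ω ≤ η) :
    ∫ ω, f ω * g ω ∂μ ≤ η * ∫ ω, f ω ∂μ := by
  have hf_ae : AEStronglyMeasurable[m0] f μ := (hf.mono hm).aestronglyMeasurable
  have hfg : Integrable (f * g) μ := hg.bdd_mul hf_ae hfC
  calc ∫ ω, f ω * g ω ∂μ = ∫ ω, μ[f * g | m] ω ∂μ := (integral_condExp hm).symm
    _ = ∫ ω, f ω * μ[g | m] ω ∂μ :=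
        integral_congr_ae (condExp_mul_of_stronglyMeasurable_left hf hfg hg)
    _ ≤ ∫ ω, f ω * η ∂μ := by
        refine integral_mono_ae (integrable_condExp.bdd_mul hf_ae hfC)
          ((Integrable.of_bound hf_ae C hfC).mul_const η) ?_
        filter_upwards [hf0, hgη] with ω hfω hgω
        exact mul_le_mul_of_nonneg_left hgω hfω
    _ = η * ∫ ω, f ω ∂μ := by rw [integral_mul_const, mul_comm]

theorem MeasureTheory.Adapted.aestronglyMeasurable {ι : Type*} [Preorder ι]
    {ℱ : Filtration ι m0} {D : ι → Ω → ℝ} (hadapted : Adapted ℱ D) (k : ι) :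
    AEStronglyMeasurable (D k) μ :=
  ((hadapted k).mono (ℱ.le k) le_rfl).aestronglyMeasurable

variable {D : ℕ → Ω → ℝ} {δ : ℝ}

theorem ae_prod_nonneg_le_pow_card (hD : ∀ k, ∀ᵐ ω ∂μ, 0 ≤ D k ω ∧ D k ω ≤ δ) (t : Finset ℕ) :
    ∀ᵐ ω ∂μ, 0 ≤ ∏ k ∈ t, D k ω ∧ ∏ k ∈ t, D k ω ≤ δ ^ t.card := by
  filter_upwards [ae_all_iff.2 hD] with ω hω
  exact ⟨prod_nonneg fun k _ => (hω k).1,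
    (prod_le_prod (fun k _ => (hω k).1) fun k _ => (hω k).2).trans_eq (prod_const δ)⟩

theorem integrable_prod [IsFiniteMeasure μ] (hmeas : ∀ k, AEStronglyMeasurable (D k) μ)
    (hD : ∀ k, ∀ᵐ ω ∂μ, 0 ≤ D k ω ∧ D k ω ≤ δ) (t : Finset ℕ) :
    Integrable (fun ω => ∏ k ∈ t, D k ω) μ :=
  .of_bound (Finset.aestronglyMeasurable_fun_prod t fun k _ => hmeas k) _
    (ae_norm_le_of_ae_nonneg_le (ae_prod_nonneg_le_pow_card hD t))

variable {ℱ : Filtration ℕ m0} {n : ℕ} {η : ℝ}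

theorem sum_integral_mul_le [IsFiniteMeasure μ] (hmeas : ∀ k, AEStronglyMeasurable (D k) μ)
    (hD : ∀ k, ∀ᵐ ω ∂μ, 0 ≤ D k ω ∧ D k ω ≤ δ) {m : MeasurableSpace Ω} (hm : m ≤ m0) {k₀ : ℕ}
    (hη : ∀ᵐ ω ∂μ, μ[fun ω' => ∑ k ∈ Icc (k₀ + 3) n, D k ω' | m] ω ≤ η)
    {f : Ω → ℝ} {C : ℝ} (hf : StronglyMeasurable[m] f) (hfC : ∀ᵐ ω ∂μ, 0 ≤ f ω ∧ f ω ≤ C) :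
    ∑ j ∈ Ioc k₀ n, ∫ ω, D j ω * f ω ∂μ ≤ (η + 2 * δ) * ∫ ω, f ω ∂μ := by
  have hf0 : ∀ᵐ ω ∂μ, 0 ≤ f ω := hfC.mono fun _ h => h.1
  have hf_int : Integrable f μ :=
    .of_bound (hf.mono hm).aestronglyMeasurable C (ae_norm_le_of_ae_nonneg_le hfC)
  have hD_int (j : ℕ) : Integrable (D j) μ :=
    .of_bound (hmeas j) δ (ae_norm_le_of_ae_nonneg_le (hD j))
  have hDf_int (j : ℕ) : Integrable (fun ω => D j ω * f ω) μ :=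
    hf_int.bdd_mul (hmeas j) (ae_norm_le_of_ae_nonneg_le (hD j))
  have hnear : ∑ j ∈ Ioc k₀ (k₀ + 2), ∫ ω, D j ω * f ω ∂μ ≤ 2 * δ * ∫ ω, f ω ∂μ :=
    calc ∑ j ∈ Ioc k₀ (k₀ + 2), ∫ ω, D j ω * f ω ∂μ
        ≤ ∑ j ∈ Ioc k₀ (k₀ + 2), δ * ∫ ω, f ω ∂μ := sum_le_sum fun j _ =>
          integral_mul_le_of_ae_le (hDf_int j) hf_int ((hD j).mono fun _ h => h.2) hf0
      _ = 2 * δ * ∫ ω, f ω ∂μ := by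
          simp only [sum_const, Nat.card_Ioc, add_tsub_cancel_left, nsmul_eq_mul, Nat.cast_ofNat]
          ring
  have hfar : ∑ j ∈ Icc (k₀ + 3) n, ∫ ω, D j ω * f ω ∂μ ≤ η * ∫ ω, f ω ∂μ := by
    rw [← integral_finsetSum _ fun j _ => hDf_int j]
    simp_rw [← sum_mul, mul_comm _ (f _)]
    exact integral_mul_le_of_condExp_le hm hf hf0 (ae_norm_le_of_ae_nonneg_le hfC)
      (integrable_finsetSum _ fun j _ => hD_int j) hη
  have hsplit : Ioc k₀ n ⊆ Ioc k₀ (k₀ + 2) ∪ Icc (k₀ + 3) n := fun j hj => by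
    simp only [mem_union, mem_Ioc, mem_Icc] at hj ⊢; omega
  have hdisj : Disjoint (Ioc k₀ (k₀ + 2)) (Icc (k₀ + 3) n) :=
    disjoint_left.2 fun j hj hj' => by simp only [mem_Ioc, mem_Icc] at hj hj'; omega
  calc ∑ j ∈ Ioc k₀ n, ∫ ω, D j ω * f ω ∂μ
      ≤ ∑ j ∈ Ioc k₀ (k₀ + 2) ∪ Icc (k₀ + 3) n, ∫ ω, D j ω * f ω ∂μ :=
        sum_le_sum_of_subset_of_nonneg hsplit fun j _ _ => integral_nonneg_of_ae <| by
          filter_upwards [hD j, hf0] with ω hDω hfω using mul_nonneg hDω.1 hfω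
    _ = ∑ j ∈ Ioc k₀ (k₀ + 2), ∫ ω, D j ω * f ω ∂μ
          + ∑ j ∈ Icc (k₀ + 3) n, ∫ ω, D j ω * f ω ∂μ := sum_union hdisj
    _ ≤ (η + 2 * δ) * ∫ ω, f ω ∂μ := by linarith

theorem sum_integral_prod_insert_le [IsFiniteMeasure μ] (hadapted : Adapted ℱ D)
    (hD : ∀ k, ∀ᵐ ω ∂μ, 0 ≤ D k ω ∧ D k ω ≤ δ)
    (hη : ∀ k₀ : ℕ, ∀ᵐ ω ∂μ, μ[fun ω' => ∑ k ∈ Icc (k₀ + 3) n, D k ω' | ℱ k₀] ω ≤ η)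
    (t : Finset ℕ) :
    ∑ m ∈ Ioc (t.sup id) n, ∫ ω, ∏ k ∈ insert m t, D k ω ∂μ
      ≤ (η + 2 * δ) * ∫ ω, ∏ k ∈ t, D k ω ∂μ := by
  have hprod : StronglyMeasurable[ℱ (t.sup id)] fun ω => ∏ k ∈ t, D k ω :=
    (Finset.measurable_fun_prod t fun k hk =>
      (hadapted k).mono (ℱ.mono (le_sup (f := id) hk)) le_rfl).stronglyMeasurable
  calc ∑ m ∈ Ioc (t.sup id) n, ∫ ω, ∏ k ∈ insert m t, D k ω ∂μ
      = ∑ m ∈ Ioc (t.sup id) n, ∫ ω, D m ω * ∏ k ∈ t, D k ω ∂μ :=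
        sum_congr rfl fun m hm => by
          simp_rw [prod_insert (notMem_of_sup_id_lt (mem_Ioc.1 hm).1)]
    _ ≤ (η + 2 * δ) * ∫ ω, ∏ k ∈ t, D k ω ∂μ :=
        sum_integral_mul_le hadapted.aestronglyMeasurable hD (ℱ.le _) (hη _) hprod (ae_prod_nonneg_le_pow_card hD t)

theorem sum_powersetCard_integral_prod_le [IsProbabilityMeasure μ] (hadapted : Adapted ℱ D)
    (hD : ∀ k, ∀ᵐ ω ∂μ, 0 ≤ D k ω ∧ D k ω ≤ δ)
    (hη : ∀ k₀ : ℕ, ∀ᵐ ω ∂μ, μ[fun ω' => ∑ k ∈ Icc (k₀ + 3) n, D k ω' | ℱ k₀] ω ≤ η)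
    (hηδ : 0 ≤ η + 2 * δ) (p : ℕ) :
    ∑ t ∈ powersetCard p (Icc 1 n), ∫ ω, ∏ k ∈ t, D k ω ∂μ ≤ (η + 2 * δ) ^ p := by
  induction p with
  | zero => simp
  | succ p ih =>
    calc ∑ t ∈ powersetCard (p + 1) (Icc 1 n), ∫ ω, ∏ k ∈ t, D k ω ∂μ
        = ∑ t ∈ powersetCard p (Icc 1 n),
            ∑ m ∈ Ioc (t.sup id) n, ∫ ω, ∏ k ∈ insert m t, D k ω ∂μ :=
          sum_powersetCard_succ_Icc_one n p _
      _ ≤ ∑ t ∈ powersetCard p (Icc 1 n), (η + 2 * δ) * ∫ ω, ∏ k ∈ t, D k ω ∂μ :=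
          sum_le_sum fun t _ => sum_integral_prod_insert_le hadapted hD hη t
      _ = (η + 2 * δ) * ∑ t ∈ powersetCard p (Icc 1 n), ∫ ω, ∏ k ∈ t, D k ω ∂μ :=
          (mul_sum ..).symm
      _ ≤ (η + 2 * δ) ^ (p + 1) := by
          rw [pow_succ']
          exact mul_le_mul_of_nonneg_left ih hηδ

end

theorem stmt11_general {Ω : Type*} [m0 : MeasurableSpace Ω] (μ : Measure Ω)
    [IsProbabilityMeasure μ]
    (ℱ : Filtration ℕ m0) (n : ℕ) (D : ℕ → Ω → ℝ)
    (hadapted : Adapted ℱ D)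
    (δ η : ℝ)
    (hD : ∀ k, ∀ᵐ ω ∂μ, 0 ≤ D k ω ∧ D k ω ≤ δ)
    (hη : ∀ k₀ : ℕ, ∀ᵐ ω ∂μ,
      (μ[fun ω' => ∑ k ∈ Finset.Icc (k₀ + 3) n, D k ω' | ℱ k₀]) ω ≤ η)
    (hηδ : η + 2 * δ < 1) :
    ∫ ω, ∏ k ∈ Finset.Icc 1 n, (1 + D k ω) ∂μ ≤ 1 / (1 - η - 2 * δ) := by
  have hδ : 0 ≤ δ := by
    obtain ⟨_, hω⟩ := (hD 0).exists
    exact hω.1.trans hω.2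
  have hη0 : 0 ≤ η := by
    obtain ⟨_, hω⟩ := (hη n).exists
    simpa [Icc_eq_empty_of_lt (by omega : n < n + 3)] using hω
  calc ∫ ω, ∏ k ∈ Icc 1 n, (1 + D k ω) ∂μ
      = ∑ t ∈ (Icc 1 n).powerset, ∫ ω, ∏ k ∈ t, D k ω ∂μ := by
        simp_rw [prod_one_add]
        exact integral_finsetSum _ fun t _ => integrable_prod hadapted.aestronglyMeasurable hD t
    _ = ∑ p ∈ range (n + 1), ∑ t ∈ powersetCard p (Icc 1 n), ∫ ω, ∏ k ∈ t, D k ω ∂μ := by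
        rw [sum_powerset, Nat.card_Icc, Nat.add_sub_cancel]
    _ ≤ ∑ p ∈ range (n + 1), (η + 2 * δ) ^ p :=
        sum_le_sum fun p _ => sum_powersetCard_integral_prod_le hadapted hD hη (by linarith) p
    _ ≤ 1 / (1 - η - 2 * δ) := by
        simpa [sub_sub] using geom_sum_Ico_le_of_lt_one (m := 0) (n := n + 1) (by linarith) hηδ

/-- Khas'minskii-type lemma for sums with 2-dependence. If
`0 ≤ Dₖ ≤ δ` a.s., the conditional expectations satisfy
`E[Σ_{k=k₀+3}^n Dₖ | 𝓕_{k₀}] ≤ η` a.s. for all `k₀`, and `η + 2δ < 1`, then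
`E[∏_{k=1}^n (1 + Dₖ)] ≤ 1/(1 − η − 2δ)`. -/
theorem stmt11 {Ω : Type*} [m0 : MeasurableSpace Ω] (μ : Measure Ω)
    [IsProbabilityMeasure μ]
    (ℱ : Filtration ℕ m0) (n : ℕ) (D : ℕ → Ω → ℝ)
    (hadapted : Adapted ℱ D) (hint : ∀ k, Integrable (D k) μ)
    (δ η : ℝ) (hδ : 0 ≤ δ)
    (hD : ∀ k, ∀ᵐ ω ∂μ, 0 ≤ D k ω ∧ D k ω ≤ δ)
    (hη : ∀ k₀ : ℕ, ∀ᵐ ω ∂μ,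
      (μ[fun ω' => ∑ k ∈ Finset.Icc (k₀ + 3) n, D k ω' | ℱ k₀]) ω ≤ η)
    (hη1 : η < 1) (hηδ : η + 2 * δ < 1) :
    ∫ ω, ∏ k ∈ Finset.Icc 1 n, (1 + D k ω) ∂μ ≤ 1 / (1 - η - 2 * δ) :=
  stmt11_general (m0 := m0) μ ℱ n D hadapted δ η hD hη hηδ
end
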